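/- arXiv:2509.08842 — 2 statements merged into one kernel-verified Lean document; each statement's English description precedes it below -/
import Mathlib

section
/- For the centered unit square Q and ζ = π/4, the set Q_{π/4} equals the closed disc centered at the origin of radius √2/2 (the circumdisc of Q). -/
open Real

abbrev E2 := EuclideanSpace ℝ (Fin 2)

def coneInt (p u : E2) (θ : ℝ) : Set E2 :=
  {x | x ≠ p ∧ Real.cos (θ / 2) * ‖x - p‖ < inner ℝ u (x - p)}

def Kzeta (K : Set E2) (ζ : ℝ) : Set E2 :=
  {p | ¬ ∃ u : E2, ‖u‖ = 1 ∧ K ⊆ coneInt p u (π - ζ)}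

/-- The centered unit square `[-1/2, 1/2]²`. -/
def Qsq : Set E2 := {x | x 0 ∈ Set.Icc (-(1/2 : ℝ)) (1/2) ∧ x 1 ∈ Set.Icc (-(1/2 : ℝ)) (1/2)}

/-!
Seen from `p`, the square subtends the angle between its two supporting lines through `p`, and
`p ∉ Q_ζ` exactly when that angle is less than `π - ζ`. The symmetries of the square reduce
everything to `0 ≤ p₁ ≤ p₀`.

If `‖p‖ ≤ √2/2` and `p ∉ Q`, then `p₀ > 1/2`, and the side `{1/2} × [-1/2, 1/2]`, a chord of the
circumcircle cut off by a right central angle, is seen from `p` at an angle of at least `3π/4`.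
Two directions inside a cone of aperture `3π/4` make an angle less than `3π/4`, so no such cone
with apex `p` contains `Q`.

If `r = ‖p‖ > √2/2`, enlarge the square so that `p` lies on its circumcircle. The directions
`w₁, w₂` from `p` to the two far corners of the enlarged square make the inscribed angle `π/4`,
and by Thales the lines through `p` orthogonal to them pass through the two near corners, so the
open half-planes `⟪wᵢ, x - p⟫ > 0` contain `Q`. In the plane, the intersection of two such
half-planes is the open cone of aperture `π - π/4` about the bisector of `w₁` and `w₂`.
-/

open InnerProductGeometry

namespace E2

lemma norm_sq_eq (v : E2) : ‖v‖ ^ 2 = v 0 ^ 2 + v 1 ^ 2 := by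
  simp [EuclideanSpace.norm_sq_eq, Fin.sum_univ_two]

lemma inner_eq (u v : E2) : inner ℝ u v = u 0 * v 0 + u 1 * v 1 := by
  simp [PiLp.inner_apply, Fin.sum_univ_two, mul_comm]

lemma gram_det_eq_zero (x y z : E2) :
    ‖x‖ ^ 2 * ‖y‖ ^ 2 * ‖z‖ ^ 2 + 2 * inner ℝ x y * inner ℝ x z * inner ℝ y z =
      ‖x‖ ^ 2 * inner ℝ y z ^ 2 + ‖y‖ ^ 2 * inner ℝ x z ^ 2 + ‖z‖ ^ 2 * inner ℝ x y ^ 2 := by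
  simp only [norm_sq_eq, inner_eq]
  ring

end E2

lemma angle_lt_of_mem_coneInt {p u x : E2} {θ : ℝ} (hu : ‖u‖ = 1) (hθ : 0 ≤ θ)
    (hx : x ∈ coneInt p u θ) : angle u (x - p) < θ / 2 := by
  rcases lt_or_ge π (θ / 2) with hπ | hπ
  · exact (angle_le_pi _ _).trans_lt hπ
  obtain ⟨hxp, hlt⟩ := hx
  have hpos : 0 < ‖x - p‖ := norm_pos_iff.mpr (sub_ne_zero.mpr hxp)
  have hcos : cos (θ / 2) < cos (angle u (x - p)) := by
    rw [cos_angle, hu, one_mul, lt_div_iff₀ hpos]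
    exact hlt
  have hangle : angle u (x - p) ∈ Set.Icc 0 π := ⟨angle_nonneg _ _, angle_le_pi _ _⟩
  exact (strictAntiOn_cos.lt_iff_gt ⟨by linarith, hπ⟩ hangle).mp hcos

lemma not_subset_coneInt_of_le_angle {K : Set E2} {p u x y : E2} {θ : ℝ} (hu : ‖u‖ = 1)
    (hθ : 0 ≤ θ) (hx : x ∈ K) (hy : y ∈ K) (hxy : θ ≤ angle (x - p) (y - p)) :
    ¬ K ⊆ coneInt p u θ := fun hK => by
  have h₁ := angle_lt_of_mem_coneInt hu hθ (hK hx)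
  have h₂ := angle_lt_of_mem_coneInt hu hθ (hK hy)
  have := angle_le_angle_add_angle (x - p) u (y - p)
  rw [angle_comm] at h₁
  linarith

lemma halfPlanes_subset_coneInt_bisector {m₁ m₂ : E2} (hm₁ : ‖m₁‖ = 1) (hm₂ : ‖m₂‖ = 1)
    (hπ : angle m₁ m₂ < π) (p : E2) :
    {x | 0 < inner ℝ m₁ (x - p) ∧ 0 < inner ℝ m₂ (x - p)} ⊆
      coneInt p (‖m₁ + m₂‖⁻¹ • (m₁ + m₂)) (π - angle m₁ m₂) := by
  rintro x ⟨hα, hβ⟩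
  set v := x - p
  set g := inner ℝ m₁ m₂
  have hg : cos (angle m₁ m₂) = g := by rw [cos_angle, hm₁, hm₂, mul_one, div_one]
  have hg1 : -1 < g := by
    rw [← hg, ← cos_pi]
    exact strictAntiOn_cos ⟨angle_nonneg _ _, angle_le_pi _ _⟩ ⟨pi_pos.le, le_rfl⟩ hπ
  have hs : ‖m₁ + m₂‖ ^ 2 = 2 * (1 + g) := by
    rw [norm_add_sq_real, hm₁, hm₂]; ring
  have hs0 : 0 < ‖m₁ + m₂‖ := lt_of_pow_lt_pow_left₀ 2 (norm_nonneg _) (by rw [hs]; nlinarith)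
  set c := cos ((π - angle m₁ m₂) / 2)
  have hc0 : 0 ≤ c := cos_nonneg_of_mem_Icc ⟨by linarith [angle_nonneg m₁ m₂, pi_pos],
    by linarith [angle_nonneg m₁ m₂]⟩
  have hc : c ^ 2 = (1 - g) / 2 := by
    rw [cos_sq, mul_div_cancel₀ _ two_ne_zero, cos_pi_sub, hg]; ring
  have hgram := E2.gram_det_eq_zero m₁ m₂ v
  rw [hm₁, hm₂] at hgram
  have hkey : (c * ‖v‖ * ‖m₁ + m₂‖) ^ 2 < (inner ℝ m₁ v + inner ℝ m₂ v) ^ 2 := by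
    rw [mul_pow, mul_pow, hc, hs]
    nlinarith [mul_pos (mul_pos hα hβ) (neg_lt_iff_pos_add'.mp hg1)]
  refine ⟨fun hxp => by simp [v, hxp] at hα, ?_⟩
  rw [real_inner_smul_left, inner_add_left, ← div_eq_inv_mul, lt_div_iff₀ hs0]
  exact lt_of_pow_lt_pow_left₀ 2 (by positivity) hkey

lemma exists_halfPlanes_subset_coneInt {w₁ w₂ : E2} (hw₁ : w₁ ≠ 0) (hw₂ : w₂ ≠ 0)
    (hπ : angle w₁ w₂ < π) (p : E2) :
    ∃ u : E2, ‖u‖ = 1 ∧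
      {x | 0 < inner ℝ w₁ (x - p) ∧ 0 < inner ℝ w₂ (x - p)} ⊆ coneInt p u (π - angle w₁ w₂) := by
  set m₁ := ‖w₁‖⁻¹ • w₁
  set m₂ := ‖w₂‖⁻¹ • w₂
  have h₁ : 0 < ‖w₁‖⁻¹ := inv_pos.mpr (norm_pos_iff.mpr hw₁)
  have h₂ : 0 < ‖w₂‖⁻¹ := inv_pos.mpr (norm_pos_iff.mpr hw₂)
  have hangle : angle m₁ m₂ = angle w₁ w₂ := by
    rw [angle_smul_left_of_pos _ _ h₁, angle_smul_right_of_pos _ _ h₂]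
  have hs : m₁ + m₂ ≠ 0 := by
    intro h
    rw [add_eq_zero_iff_eq_neg.mp h, angle_neg_self_of_nonzero] at hangle
    · exact hπ.ne' hangle
    · simpa [m₂] using hw₂
  refine ⟨‖m₁ + m₂‖⁻¹ • (m₁ + m₂), norm_smul_inv_norm hs, fun x ⟨hx₁, hx₂⟩ => ?_⟩
  rw [← hangle]
  refine halfPlanes_subset_coneInt_bisector (norm_smul_inv_norm hw₁) (norm_smul_inv_norm hw₂)
    (hangle ▸ hπ) p ⟨?_, ?_⟩
  · rw [real_inner_smul_left]; positivity
  · rw [real_inner_smul_left]; positivity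

lemma mem_Kzeta_iff_of_preimage_eq (L : E2 ≃ₗᵢ[ℝ] E2) {K : Set E2} (hK : L ⁻¹' K = K)
    (p : E2) (ζ : ℝ) : L p ∈ Kzeta K ζ ↔ p ∈ Kzeta K ζ := by
  have hcone : ∀ u θ, L ⁻¹' coneInt (L p) (L u) θ = coneInt p u θ := by
    intro u θ
    ext x
    simp [coneInt, ← map_sub]
  simp only [Kzeta, Set.mem_ofPred_eq]
  rw [not_iff_not]
  constructor
  · rintro ⟨u, hu, hKu⟩
    refine ⟨L.symm u, by simpa using hu, ?_⟩
    rw [← hcone, L.apply_symm_apply, ← hK]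
    exact Set.preimage_mono hKu
  · rintro ⟨u, hu, hKu⟩
    refine ⟨L u, by simpa using hu, ?_⟩
    rw [← L.surjective.preimage_subset_preimage_iff, hK, hcone]
    exact hKu

lemma mem_Qsq_iff (q : E2) : q ∈ Qsq ↔ |q 0| ≤ 1 / 2 ∧ |q 1| ≤ 1 / 2 := by
  simp [Qsq, abs_le]

lemma exists_symmetry_Qsq (p : E2) :
    ∃ L : E2 ≃ₗᵢ[ℝ] E2, L ⁻¹' Qsq = Qsq ∧ 0 ≤ L p 1 ∧ L p 1 ≤ L p 0 := by
  let F : E2 ≃ₗᵢ[ℝ] E2 := LinearIsometryEquiv.piLpCongrRight 2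
    fun i => if 0 ≤ p i then LinearIsometryEquiv.refl ℝ ℝ else LinearIsometryEquiv.neg ℝ
  have hF : ∀ q i, |F q i| = |q i| := by
    intro q i
    by_cases h : 0 ≤ p i <;> simp [F, h]
  have hFp : ∀ i, F p i = |p i| := by
    intro i
    by_cases h : 0 ≤ p i
    · simp [F, h, abs_of_nonneg h]
    · simp [F, h, abs_of_neg (not_le.mp h)]
  have hFQ : F ⁻¹' Qsq = Qsq := by
    ext q
    simp only [Set.mem_preimage, mem_Qsq_iff, hF]
  by_cases hle : |p 1| ≤ |p 0|
  · exact ⟨F, hFQ, by simp [hFp], by simpa [hFp] using hle⟩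
  let S : E2 ≃ₗᵢ[ℝ] E2 := LinearIsometryEquiv.piLpCongrLeft 2 ℝ ℝ (Equiv.swap 0 1)
  have hS : ∀ q, S q 0 = q 1 ∧ S q 1 = q 0 := fun q => by simp [S, Equiv.piCongrLeft']
  refine ⟨F.trans S, ?_, ?_, ?_⟩
  · ext q
    simp only [Set.mem_preimage, LinearIsometryEquiv.coe_trans, Function.comp_apply,
      mem_Qsq_iff, hS, hF, and_comm]
  · simp [hS, hFp]
  · simpa [hS, hFp] using (not_le.mp hle).le

lemma neg_le_inner_of_mem_Qsq (w : E2) {q : E2} (hq : q ∈ Qsq) :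
    -((|w 0| + |w 1|) / 2) ≤ inner ℝ w q := by
  rw [mem_Qsq_iff] at hq
  rw [E2.inner_eq]
  have h₀ := (abs_mul (w 0) (q 0)).symm ▸ mul_le_mul_of_nonneg_left hq.1 (abs_nonneg (w 0))
  have h₁ := (abs_mul (w 1) (q 1)).symm ▸ mul_le_mul_of_nonneg_left hq.2 (abs_nonneg (w 1))
  linarith [neg_abs_le (w 0 * q 0), neg_abs_le (w 1 * q 1)]

lemma Qsq_subset_halfPlane {w p : E2} (h : inner ℝ w p < -((|w 0| + |w 1|) / 2)) :
    Qsq ⊆ {x | 0 < inner ℝ w (x - p)} := fun q hq => by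
  have := neg_le_inner_of_mem_Qsq w hq
  rw [Set.mem_ofPred_eq, inner_sub_right]
  linarith

lemma le_angle_sub_corners {p : E2} (hp : ‖p‖ ≤ √2 / 2) (h0 : 1 / 2 < p 0) :
    π - π / 4 ≤ angle (!₂[1 / 2, 1 / 2] - p) (!₂[1 / 2, -(1 / 2)] - p) := by
  set v : E2 := !₂[1 / 2, 1 / 2] - p
  set w : E2 := !₂[1 / 2, -(1 / 2)] - p
  set a := p 0
  set b := p 1
  have hr : a ^ 2 + b ^ 2 ≤ 1 / 2 := by
    have := pow_le_pow_left₀ (norm_nonneg p) hp 2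
    rw [E2.norm_sq_eq, div_pow, sq_sqrt zero_le_two] at this
    linarith
  have hv : ‖v‖ ^ 2 = (1 / 2 - a) ^ 2 + (1 / 2 - b) ^ 2 := by simp [v, E2.norm_sq_eq, a, b]
  have hw : ‖w‖ ^ 2 = (1 / 2 - a) ^ 2 + (1 / 2 + b) ^ 2 := by
    simp [w, E2.norm_sq_eq, a, b]; ring
  have hvw : inner ℝ v w = -(a - a ^ 2 - b ^ 2) := by simp [v, w, E2.inner_eq, a, b]; ring
  have hD : 0 ≤ a - a ^ 2 - b ^ 2 := by nlinarith
  have hsq : (√2 / 2 * (‖v‖ * ‖w‖)) ^ 2 ≤ (a - a ^ 2 - b ^ 2) ^ 2 := by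
    have : 2 * (a - a ^ 2 - b ^ 2) ^ 2 - ‖v‖ ^ 2 * ‖w‖ ^ 2 =
        (a - 1 / 2) * (1 - 2 * (a ^ 2 + b ^ 2)) + (a ^ 2 + b ^ 2 - 1 / 2) ^ 2 := by
      rw [hv, hw]; ring
    rw [mul_pow, mul_pow, div_pow, sq_sqrt zero_le_two]
    nlinarith [sq_nonneg (a ^ 2 + b ^ 2 - 1 / 2)]
  have hN : 0 < ‖v‖ * ‖w‖ := by
    refine mul_pos (lt_of_pow_lt_pow_left₀ 2 (norm_nonneg v) ?_)
      (lt_of_pow_lt_pow_left₀ 2 (norm_nonneg w) ?_)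
    · rw [hv]; nlinarith
    · rw [hw]; nlinarith
  have hcos : cos (angle v w) ≤ cos (π - π / 4) := by
    rw [← cos_angle_mul_norm_mul_norm] at hvw
    rw [cos_pi_sub, cos_pi_div_four]
    refine le_of_mul_le_mul_right ?_ hN
    linarith [(sq_le_sq₀ (by positivity) hD).mp hsq]
  exact (strictAntiOn_cos.le_iff_ge ⟨angle_nonneg _ _, angle_le_pi _ _⟩
    ⟨by linarith [pi_pos], by linarith [pi_pos]⟩).mp hcos

lemma exists_subset_coneInt_of_sector {p : E2} (hp : √2 / 2 < ‖p‖) (hb : 0 ≤ p 1)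
    (hba : p 1 ≤ p 0) : ∃ u : E2, ‖u‖ = 1 ∧ Qsq ⊆ coneInt p u (π - π / 4) := by
  set a := p 0
  set b := p 1
  set r := ‖p‖
  set s := √2 / 2
  have hs : s ^ 2 = 1 / 2 := by rw [div_pow, sq_sqrt zero_le_two]; norm_num
  have hs0 : 0 < s := by positivity
  have hr : r ^ 2 = a ^ 2 + b ^ 2 := E2.norm_sq_eq p
  have ha : 0 ≤ a := hb.trans hba
  have hbr : b ≤ s * r :=
    (sq_le_sq₀ hb (by positivity)).mp (by rw [mul_pow, hs, hr]; nlinarith)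
  -- `wᵢ = cᵢ - p` for the far corners `cᵢ = (-s r, ±s r)` of the enlarged square.
  set w₁ : E2 := !₂[-(s * r + a), s * r - b]
  set w₂ : E2 := !₂[-(s * r + a), -(s * r + b)]
  have hw₁ : ‖w₁‖ ^ 2 = 2 * r ^ 2 + 2 * s * r * (a - b) := by
    simp [w₁, E2.norm_sq_eq]; linear_combination 2 * r ^ 2 * hs - hr
  have hw₂ : ‖w₂‖ ^ 2 = 2 * r ^ 2 + 2 * s * r * (a + b) := by
    simp [w₂, E2.norm_sq_eq]; linear_combination 2 * r ^ 2 * hs - hr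
  have hw₁₂ : inner ℝ w₁ w₂ = r ^ 2 + 2 * s * a * r := by
    simp [w₁, w₂, E2.inner_eq]; linear_combination - hr
  have hn₁ : 0 < ‖w₁‖ := lt_of_pow_lt_pow_left₀ 2 (norm_nonneg _) (by rw [hw₁]; nlinarith)
  have hn₂ : 0 < ‖w₂‖ := lt_of_pow_lt_pow_left₀ 2 (norm_nonneg _) (by rw [hw₂]; nlinarith)
  have hinner : inner ℝ w₁ w₂ = s * (‖w₁‖ * ‖w₂‖) := by
    refine (sq_eq_sq₀ (by rw [hw₁₂]; positivity) (by positivity)).mp ?_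
    rw [mul_pow, mul_pow, hw₁, hw₂, hw₁₂, hs]
    linear_combination 2 * r ^ 2 * (a ^ 2 + b ^ 2) * hs - r ^ 2 * hr
  have hangle : angle w₁ w₂ = π / 4 := by
    rw [angle, hinner, mul_div_cancel_right₀ _ (by positivity),
      show s = cos (π / 4) from cos_pi_div_four.symm,
      arccos_cos (by positivity) (by linarith [pi_pos])]
  have hQ₁ : Qsq ⊆ {x | 0 < inner ℝ w₁ (x - p)} := by
    refine Qsq_subset_halfPlane ?_
    have hp₁ : inner ℝ w₁ p = -(r ^ 2) - s * r * (a - b) := by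
      simp [w₁, E2.inner_eq]; linear_combination hr
    simp only [w₁, Matrix.cons_val_zero, Matrix.cons_val_one, abs_neg, hp₁,
      abs_of_nonneg (by positivity : 0 ≤ s * r + a), abs_of_nonneg (by linarith : 0 ≤ s * r - b)]
    nlinarith [mul_pos (sub_pos.mpr hp) (by nlinarith : 0 < r + s * (a - b))]
  have hQ₂ : Qsq ⊆ {x | 0 < inner ℝ w₂ (x - p)} := by
    refine Qsq_subset_halfPlane ?_
    have hp₂ : inner ℝ w₂ p = -(r ^ 2) - s * r * (a + b) := by
      simp [w₂, E2.inner_eq]; linear_combination hr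
    simp only [w₂, Matrix.cons_val_zero, Matrix.cons_val_one, abs_neg, hp₂,
      abs_of_nonneg (by positivity : 0 ≤ s * r + a), abs_of_nonneg (by positivity : 0 ≤ s * r + b)]
    nlinarith [mul_pos (sub_pos.mpr hp) (by nlinarith : 0 < r + s * (a + b))]
  obtain ⟨u, hu, hcone⟩ := exists_halfPlanes_subset_coneInt (norm_pos_iff.mp hn₁)
    (norm_pos_iff.mp hn₂) (by rw [hangle]; linarith [pi_pos]) p
  exact ⟨u, hu, fun x hx => hangle ▸ hcone ⟨hQ₁ hx, hQ₂ hx⟩⟩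

lemma mem_Kzeta_Qsq_iff_of_sector {p : E2} (hb : 0 ≤ p 1) (hba : p 1 ≤ p 0) :
    p ∈ Kzeta Qsq (π / 4) ↔ ‖p‖ ≤ √2 / 2 := by
  constructor
  · intro hp
    by_contra h
    exact hp (exists_subset_coneInt_of_sector (not_le.mp h) hb hba)
  · rintro hp ⟨u, hu, hQ⟩
    by_cases hp₀ : p 0 ≤ 1 / 2
    · have hpQ : p ∈ Qsq := (mem_Qsq_iff p).mpr
        ⟨abs_le.mpr ⟨by linarith, hp₀⟩, abs_le.mpr ⟨by linarith, by linarith⟩⟩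
      exact (hQ hpQ).1 rfl
    · refine not_subset_coneInt_of_le_angle hu (by linarith [pi_pos]) ?_ ?_
        (le_angle_sub_corners hp (not_le.mp hp₀)) hQ
      · simp [mem_Qsq_iff]
      · simp [mem_Qsq_iff]

theorem stmt3 : Kzeta Qsq (π / 4) = Metric.closedBall (0 : E2) (Real.sqrt 2 / 2) := by
  ext p
  obtain ⟨L, hLQ, hb, hba⟩ := exists_symmetry_Qsq p
  rw [← mem_Kzeta_iff_of_preimage_eq L hLQ, mem_closedBall_zero_iff, ← L.norm_map]
  exact mem_Kzeta_Qsq_iff_of_sector hb hba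
end

section
/- Let r ≥ 0, t ∈ ((1+r)/√2, 1+r], w = √((1+r)² − t²), x₀ = (1/√2)(1,1), x₁ = (1/√2)(−1,1), and define R₀ = {x ∈ (1+r)U : t ≤ ⟨x, x₀⟩ ≤ 1}, R₁ = {x ∈ (1+r)U : t ≤ ⟨x, x₁⟩ ≤ 1}. Then R₀ ∪ R₁ is contained in the closed disc centered at m = (1/√2)(0, t − w) with radius ρ = (t + w)/√2. -/
open Real

/-! With `p = ⟪x, x₀⟫`, `q = ⟪x, x₁⟫` and `m = ((t - w) / 2) • (x₀ + x₁)`, orthonormality of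
`(x₀, x₁)` gives `‖x - m‖² = ‖x‖² - (t - w)(p + q) + (t - w)² / 2`. On `R₀` we have `p ≥ t`, and
Bessel's inequality gives `q² ≤ ‖x‖² - p² ≤ w²`, so `p + q ≥ t - w`; since `w ≤ t` (this is where
`t > (1 + r) / √2` enters) and `‖x‖² ≤ t² + w²`, this yields `‖x - m‖² ≤ (t + w)² / 2`.
The centre `m` is symmetric in `x₀, x₁`, so `R₁` is handled by swapping them. -/

open Metric RealInnerProductSpace

section

variable {F : Type*} [NormedAddCommGroup F] [InnerProductSpace ℝ F]

theorem inner_sq_add_inner_sq_le_norm_sq {u v : F} (huv : Orthonormal ℝ ![u, v]) (x : F) :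
    ⟪x, u⟫ ^ 2 + ⟪x, v⟫ ^ 2 ≤ ‖x‖ ^ 2 := by
  simpa [Fin.sum_univ_two, real_inner_comm x] using huv.sum_inner_products_le (s := Finset.univ) x

theorem Orthonormal.swap_pair {u v : F} (huv : Orthonormal ℝ ![u, v]) : Orthonormal ℝ ![v, u] := by
  simp only [orthonormal_iff_ite, Fin.forall_fin_two] at huv ⊢
  simpa [real_inner_comm u v, and_comm] using huv

theorem mem_closedBall_of_le_inner {u v x : F} (huv : Orthonormal ℝ ![u, v]) {t w : ℝ}
    (hw : 0 ≤ w) (hwt : w ≤ t) (hx : ‖x‖ ^ 2 ≤ t ^ 2 + w ^ 2) (hxu : t ≤ ⟪x, u⟫) :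
    x ∈ closedBall (((t - w) / 2) • (u + v)) ((t + w) / √2) := by
  have hu : ‖u‖ = 1 := by simpa using huv.1 0
  have hv : ‖v‖ = 1 := by simpa using huv.1 1
  have huv0 : ⟪u, v⟫ = 0 := by simpa using huv.2 (show (0 : Fin 2) ≠ 1 by decide)
  have hxv : -w ≤ ⟪x, v⟫ := by
    refine (abs_le_of_sq_le_sq' ?_ hw).1
    nlinarith [inner_sq_add_inner_sq_le_norm_sq huv x]
  have hdist : ‖x - ((t - w) / 2) • (u + v)‖ ^ 2
      = ‖x‖ ^ 2 - (t - w) * (⟪x, u⟫ + ⟪x, v⟫) + (t - w) ^ 2 / 2 := by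
    rw [norm_sub_sq_real, norm_smul, mul_pow, norm_add_sq_real, inner_smul_right,
      inner_add_right, hu, hv, huv0, Real.norm_eq_abs, sq_abs]
    ring
  rw [mem_closedBall, dist_eq_norm, ← pow_le_pow_iff_left₀ (norm_nonneg _)
    (div_nonneg (by linarith) (sqrt_nonneg _)) two_ne_zero, hdist, div_pow, sq_sqrt zero_le_two]
  nlinarith [mul_le_mul_of_nonneg_left (by linarith : t - w ≤ ⟪x, u⟫ + ⟪x, v⟫) (sub_nonneg.2 hwt)]

end

theorem orthonormal_diagonals {x₀ x₁ : E2} (hx₀ : x₀.ofLp = ![1 / √2, 1 / √2])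
    (hx₁ : x₁.ofLp = ![-(1 / √2), 1 / √2]) : Orthonormal ℝ ![x₀, x₁] := by
  have hs : (√2)⁻¹ * (√2)⁻¹ = 2⁻¹ := by rw [← mul_inv, mul_self_sqrt zero_le_two]
  simp [orthonormal_iff_ite, Fin.forall_fin_two, PiLp.inner_apply, hx₀, hx₁, hs]
  norm_num

theorem pos_and_sqrt_sq_sub_sq_le_of_mem_Ioc {R t : ℝ} (ht : t ∈ Set.Ioc (R / √2) R) :
    0 < t ∧ √(R ^ 2 - t ^ 2) ≤ t := by
  obtain ⟨hlt, hle⟩ := ht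
  have hs : 0 < √2 := sqrt_pos.2 two_pos
  have hR : 0 < R := by
    by_contra! h
    have : R ≤ R / √2 := by
      rw [le_div_iff₀ hs]
      nlinarith [one_le_sqrt.2 one_le_two]
    linarith
  have ht0 : 0 < t := (div_pos hR hs).trans hlt
  refine ⟨ht0, sqrt_le_iff.2 ⟨ht0.le, ?_⟩⟩
  have : R < √2 * t := by rwa [div_lt_iff₀' hs] at hlt
  nlinarith [sq_sqrt zero_le_two]

theorem stmt12_general (r t w : ℝ)
    (ht : t ∈ Set.Ioc ((1 + r) / Real.sqrt 2) (1 + r))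
    (hw : w = Real.sqrt ((1 + r) ^ 2 - t ^ 2))
    (x₀ x₁ m : E2)
    (hx₀ : x₀ = ![1 / Real.sqrt 2, 1 / Real.sqrt 2])
    (hx₁ : x₁ = ![-(1 / Real.sqrt 2), 1 / Real.sqrt 2])
    (hm : m = ![0, (t - w) / Real.sqrt 2])
    (R₀ R₁ : Set E2)
    (hR₀ : R₀ = {x ∈ Metric.closedBall (0 : E2) (1 + r) |
        t ≤ inner ℝ x x₀ ∧ inner ℝ x x₀ ≤ (1 : ℝ)})
    (hR₁ : R₁ = {x ∈ Metric.closedBall (0 : E2) (1 + r) |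
        t ≤ inner ℝ x x₁ ∧ inner ℝ x x₁ ≤ (1 : ℝ)}) :
    R₀ ∪ R₁ ⊆ Metric.closedBall m ((t + w) / Real.sqrt 2) := by
  obtain ⟨ht0, hwt⟩ := pos_and_sqrt_sq_sub_sq_le_of_mem_Ioc ht
  rw [← hw] at hwt
  have hw0 : 0 ≤ w := hw ▸ sqrt_nonneg _
  have hR : (1 + r) ^ 2 = t ^ 2 + w ^ 2 := by
    rw [hw, sq_sqrt (sub_nonneg.2 (pow_le_pow_left₀ ht0.le ht.2 2))]
    ring
  have hm_smul : m = ((t - w) / 2) • (x₀ + x₁) := by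
    ext i
    fin_cases i
    · simp [hm, hx₀, hx₁]
    · simp [hm, hx₀, hx₁]
      ring
  have huv := orthonormal_diagonals hx₀ hx₁
  subst hR₀ hR₁
  rintro x (⟨hx, hxt, -⟩ | ⟨hx, hxt, -⟩) <;>
    have hxR : ‖x‖ ^ 2 ≤ t ^ 2 + w ^ 2 :=
      hR ▸ pow_le_pow_left₀ (norm_nonneg x) (mem_closedBall_zero_iff.1 hx) 2
  · exact hm_smul ▸ mem_closedBall_of_le_inner huv hw0 hwt hxR hxt
  · rw [hm_smul, add_comm]
    exact mem_closedBall_of_le_inner huv.swap_pair hw0 hwt hxR hxt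

theorem stmt12 (r t w : ℝ) (hr : 0 ≤ r)
    (ht : t ∈ Set.Ioc ((1 + r) / Real.sqrt 2) (1 + r))
    (hw : w = Real.sqrt ((1 + r) ^ 2 - t ^ 2))
    (x₀ x₁ m : E2)
    (hx₀ : x₀ = ![1 / Real.sqrt 2, 1 / Real.sqrt 2])
    (hx₁ : x₁ = ![-(1 / Real.sqrt 2), 1 / Real.sqrt 2])
    (hm : m = ![0, (t - w) / Real.sqrt 2])
    (R₀ R₁ : Set E2)
    (hR₀ : R₀ = {x ∈ Metric.closedBall (0 : E2) (1 + r) |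
        t ≤ inner ℝ x x₀ ∧ inner ℝ x x₀ ≤ (1 : ℝ)})
    (hR₁ : R₁ = {x ∈ Metric.closedBall (0 : E2) (1 + r) |
        t ≤ inner ℝ x x₁ ∧ inner ℝ x x₁ ≤ (1 : ℝ)}) :
    R₀ ∪ R₁ ⊆ Metric.closedBall m ((t + w) / Real.sqrt 2) :=
  stmt12_general r t w ht hw x₀ x₁ m hx₀ hx₁ hm R₀ R₁ hR₀ hR₁
end
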